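/- arXiv:2603.05508 — 3 statements merged into one kernel-verified Lean document; each statement's English description precedes it below -/
import Mathlib

section
/- Given a plant with closed behavior L ⊆ Σ* and a specification K ⊆ Σ*, the family C(K) of controllable sublanguages of K is closed under arbitrary unions; consequently C(K) contains a unique supremal element sup C(K) = ⋃{K' | K' ∈ C(K)}, which is itself a controllable sublanguage of K. -/
/-- Prefix closure of a language over alphabet `A`. -/
def cl {A : Type*} (L : Set (List A)) : Set (List A) := {s | ∃ t, s ++ t ∈ L}

/-- Controllability of K' w.r.t. plant behavior L and uncontrollable events Su. -/
def Controllable {A : Type*} (Su : Set A) (L K' : Set (List A)) : Prop :=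
  ∀ s ∈ cl K', ∀ σ ∈ Su, s ++ [σ] ∈ L → s ++ [σ] ∈ cl K'

/-- The family of controllable sublanguages of K. -/
def CFam {A : Type*} (Su : Set A) (L K : Set (List A)) : Set (Set (List A)) :=
  {K' | K' ⊆ K ∧ Controllable Su L K'}

/-! Controllability is preserved by arbitrary unions because prefix closure commutes with them;
the supremal element is then the union of the whole family. -/

theorem cl_sUnion {A : Type*} (F : Set (Set (List A))) : cl (⋃₀ F) = ⋃ K' ∈ F, cl K' := by
  ext s
  simp only [cl, Set.mem_sUnion, Set.mem_iUnion, Set.mem_ofPred_eq, exists_prop]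
  exact ⟨fun ⟨t, K', hK', hst⟩ => ⟨K', hK', t, hst⟩, fun ⟨K', hK', t, hst⟩ => ⟨t, K', hK', hst⟩⟩

theorem Controllable.sUnion {A : Type*} {Su : Set A} {L : Set (List A)}
    {F : Set (Set (List A))} (hF : ∀ K' ∈ F, Controllable Su L K') :
    Controllable Su L (⋃₀ F) := by
  intro s hs σ hσ hL
  rw [cl_sUnion, Set.mem_iUnion₂] at hs ⊢
  obtain ⟨K', hK', hsK'⟩ := hs
  exact ⟨K', hK', hF K' hK' s hsK' σ hσ hL⟩

theorem sUnion_mem_CFam {A : Type*} {Su : Set A} {L K : Set (List A)}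
    {F : Set (Set (List A))} (hF : F ⊆ CFam Su L K) : ⋃₀ F ∈ CFam Su L K :=
  ⟨Set.sUnion_subset fun _ hK' => (hF hK').1, Controllable.sUnion fun _ hK' => (hF hK').2⟩

theorem supC_exists_general {A : Type*} (Su : Set A)
    (L : Set (List A)) (K : Set (List A)) :
    (∀ F ⊆ CFam Su L K, ⋃₀ F ∈ CFam Su L K) ∧
    (⋃₀ CFam Su L K) ∈ CFam Su L K ∧
    (∀ K' ∈ CFam Su L K, K' ⊆ ⋃₀ CFam Su L K) :=
  ⟨fun _ => sUnion_mem_CFam, sUnion_mem_CFam subset_rfl, fun _ => Set.subset_sUnion_of_mem⟩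

theorem supC_exists {A : Type*} [Fintype A] (Sc Su : Set A) (hpart : Sc ∪ Su = Set.univ)
    (L : Set (List A)) (hclosed : cl L = L) (K : Set (List A)) :
    (∀ F ⊆ CFam Su L K, ⋃₀ F ∈ CFam Su L K) ∧
    (⋃₀ CFam Su L K) ∈ CFam Su L K ∧
    (∀ K' ∈ CFam Su L K, K' ⊆ ⋃₀ CFam Su L K) :=
  supC_exists_general Su L K
end

section
/- (Restricted marking informativity is closed under union) If (D, D_m, D⁻) is K₁-informative and K₂-informative, then it is (K₁ ∪ K₂)-informative. Here (D, D_m, D⁻) is K-informative means K ⊆ D_m ∩ E and for all s ∈ cl(K) and σ ∈ Σᵤ, sσ ∈ cl(K) ∪ D⁻. -/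
/-- (D, Dm, Dneg) is K-informative for specification E. -/
def KInformative {A : Type*} (Su : Set A) (Dm E Dneg K : Set (List A)) : Prop :=
  K ⊆ Dm ∩ E ∧ ∀ s ∈ cl K, ∀ σ ∈ Su, s ++ [σ] ∈ cl K ∪ Dneg

theorem cl_union {A : Type*} (L₁ L₂ : Set (List A)) : cl (L₁ ∪ L₂) = cl L₁ ∪ cl L₂ := by
  ext s
  exact exists_or

theorem KInformative_union_general {A : Type*}
    (Su : Set A)
    (Dm Dneg E : Set (List A))
    (K₁ K₂ : Set (List A))
    (h₁ : KInformative Su Dm E Dneg K₁) (h₂ : KInformative Su Dm E Dneg K₂) :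
    KInformative Su Dm E Dneg (K₁ ∪ K₂) := by
  refine ⟨Set.union_subset h₁.1 h₂.1, ?_⟩
  rw [cl_union]
  rintro s (hs | hs) σ hσ
  · exact (h₁.2 s hs σ hσ).imp_left Or.inl
  · exact (h₂.2 s hs σ hσ).imp_left Or.inr

theorem KInformative_union {A : Type*} [Fintype A]
    (Sc Su : Set A) (hpart : Sc ∪ Su = Set.univ)
    (D Dm Dneg E : Set (List A)) (hDm : Dm ⊆ cl D) (hdisj : cl D ∩ Dneg = ∅)
    (K₁ K₂ : Set (List A))
    (h₁ : KInformative Su Dm E Dneg K₁) (h₂ : KInformative Su Dm E Dneg K₂) :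
    KInformative Su Dm E Dneg (K₁ ∪ K₂) :=
  KInformative_union_general Su Dm Dneg E K₁ K₂ h₁ h₂
end

section
/- The family I(K_{D_m}) := {K ⊆ K_{D_m} | (D, D_m, D⁻) is K-informative} contains a unique largest member K_sup = ⋃{K | K ∈ I(K_{D_m})}, and (D, D_m, D⁻) is K_sup-informative. -/
lemma cl_mono {A : Type*} {K L : Set (List A)} (h : K ⊆ L) : cl K ⊆ cl L :=
  fun s ⟨t, ht⟩ => ⟨t, h ht⟩

theorem Ksup_largest {A : Type*} [Fintype A]
    (Sc Su : Set A) (hpart : Sc ∪ Su = Set.univ)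
    (Dm Dneg E : Set (List A)) :
    KInformative Su Dm E Dneg (⋃₀ {K | KInformative Su Dm E Dneg K}) ∧
    (∀ K, KInformative Su Dm E Dneg K → K ⊆ ⋃₀ {K | KInformative Su Dm E Dneg K}) ∧
    (∀ M, KInformative Su Dm E Dneg M →
      (∀ K, KInformative Su Dm E Dneg K → K ⊆ M) →
      M = ⋃₀ {K | KInformative Su Dm E Dneg K}) := by
  have hsub : ∀ K, KInformative Su Dm E Dneg K →
      K ⊆ ⋃₀ {K | KInformative Su Dm E Dneg K} :=
    fun K hK x hx => ⟨K, hK, hx⟩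
  have hinf : KInformative Su Dm E Dneg (⋃₀ {K | KInformative Su Dm E Dneg K}) := by
    constructor
    · rintro x ⟨K, hK, hx⟩
      exact hK.1 hx
    · rintro s ⟨t, ht⟩ σ hσ
      rcases ht with ⟨K, hK, hKmem⟩
      rcases hK.2 s ⟨t, hKmem⟩ σ hσ with h | h
      · exact Or.inl (cl_mono (hsub K hK) h)
      · exact Or.inr h
  refine ⟨hinf, hsub, fun M hM hmax => ?_⟩
  exact le_antisymm (hsub M hM) (Set.sUnion_subset fun K hK => hmax K hK)
end
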